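/- Among all absolutely continuous probability densities on R^n with zero mean satisfying the second-moment constraint E[‖x‖²_{P⁻¹}] ≤ c for a fixed positive definite matrix P and c > 0, the zero-mean Gaussian density with covariance (c/n)·P uniquely maximizes differential entropy. -/

import Mathlib

/-!
Let `q` be the Gaussian density with covariance `S = (c / n) • P`. Since `log q` is a constant
minus `xᵀ S⁻¹ x / 2`, the cross entropy `-∫ p log q` only depends on the mass and on the
`S⁻¹`-weighted second moment of `p`; the moment constraint makes it at most its value at `p = q`,
which is `H(q)` because `q` has moment exactly `n`. Gibbs' inequality `∫ p log q ≤ ∫ p log p`,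
whose gap is `∫ q · klFun (p / q) ≥ 0`, then gives `H(p) ≤ H(q)`, and in the equality case
`klFun (p / q) = 0`, i.e. `p = q`, almost everywhere.

The Gaussian integrals are computed by writing `S⁻¹ = Bᵀ B` and substituting `y = B x`, which
reduces them to the standard Gaussian, a product of one-dimensional ones.
-/

open MeasureTheory Real Matrix

/-- Zero-mean Gaussian density on ℝⁿ with covariance matrix `S`. -/
noncomputable def gaussDensity {n : ℕ} (S : Matrix (Fin n) (Fin n) ℝ)
    (x : Fin n → ℝ) : ℝ :=
  (2 * π) ^ (-(n : ℝ) / 2) * (Real.sqrt S.det)⁻¹ *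
    Real.exp (-(x ⬝ᵥ S⁻¹ *ᵥ x) / 2)

/-- Differential entropy of a density on ℝⁿ. -/
noncomputable def diffEntropy {n : ℕ} (p : (Fin n → ℝ) → ℝ) : ℝ :=
  -∫ x, p x * Real.log (p x)

lemma integrable_exp_neg_sq_div_two : Integrable fun x : ℝ => exp (-x ^ 2 / 2) := by
  simpa [neg_div, div_eq_inv_mul] using integrable_exp_neg_mul_sq (b := 1 / 2) (by norm_num)

lemma integral_exp_neg_sq_div_two : ∫ x : ℝ, exp (-x ^ 2 / 2) = √(2 * π) := by
  simpa [neg_div, div_eq_inv_mul, div_inv_eq_mul] using integral_gaussian (1 / 2)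

lemma integrable_sq_mul_exp_neg_sq_div_two : Integrable fun x : ℝ => x ^ 2 * exp (-x ^ 2 / 2) := by
  simpa [neg_div, div_eq_inv_mul] using
    integrable_rpow_mul_exp_neg_mul_sq (b := 1 / 2) (by norm_num) (s := 2) (by norm_num)

open ProbabilityTheory in
/-- The variance of `gaussianReal 0 1`, written against its density. -/
lemma integral_sq_mul_exp_neg_sq_div_two : ∫ x : ℝ, x ^ 2 * exp (-x ^ 2 / 2) = √(2 * π) := by
  have hvar : ∫ x, x ^ 2 ∂gaussianReal 0 1 = 1 := by
    rw [← variance_of_integral_eq_zero measurable_id'.aemeasurable (by simp)]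
    exact variance_fun_id_gaussianReal
  simp only [integral_gaussianReal_eq_integral_smul one_ne_zero, gaussianPDFReal, smul_eq_mul,
    NNReal.coe_one, mul_one, sub_zero, mul_assoc, integral_const_mul] at hvar
  rw [inv_mul_eq_iff_eq_mul₀ (by positivity), mul_one] at hvar
  simpa only [mul_comm] using hvar

section StandardGaussian

variable {ι : Type*} [Fintype ι]

lemma exp_neg_dotProduct_self_div_two (y : ι → ℝ) :
    exp (-(y ⬝ᵥ y) / 2) = ∏ i, exp (-y i ^ 2 / 2) := by
  simp only [← exp_sum, dotProduct, ← sq, neg_div, Finset.sum_neg_distrib, Finset.sum_div]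

lemma integrable_exp_neg_dotProduct_self_div_two :
    Integrable fun y : ι → ℝ => exp (-(y ⬝ᵥ y) / 2) := by
  simp_rw [exp_neg_dotProduct_self_div_two]
  exact Integrable.fintype_prod fun _ => integrable_exp_neg_sq_div_two

lemma integral_exp_neg_dotProduct_self_div_two :
    ∫ y : ι → ℝ, exp (-(y ⬝ᵥ y) / 2) = √(2 * π) ^ Fintype.card ι := by
  simp_rw [exp_neg_dotProduct_self_div_two]
  rw [integral_fintype_prod_volume_eq_pow (fun x : ℝ => exp (-x ^ 2 / 2)),
    integral_exp_neg_sq_div_two]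

variable [DecidableEq ι]

/-- Each summand is a product of functions of one coordinate, so it integrates by Fubini. -/
lemma dotProduct_self_mul_exp_neg_dotProduct_self_div_two (y : ι → ℝ) :
    (y ⬝ᵥ y) * exp (-(y ⬝ᵥ y) / 2) =
      ∑ i, ∏ j, (if j = i then y j ^ 2 else 1) * exp (-y j ^ 2 / 2) := by
  rw [exp_neg_dotProduct_self_div_two, dotProduct, Finset.sum_mul]
  simp only [Finset.prod_mul_distrib, Finset.prod_ite_eq', Finset.mem_univ, if_true, sq]

lemma integrable_ite_sq_mul_exp_neg_sq_div_two (b : Prop) [Decidable b] :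
    Integrable fun t : ℝ => (if b then t ^ 2 else 1) * exp (-t ^ 2 / 2) := by
  split_ifs
  · exact integrable_sq_mul_exp_neg_sq_div_two
  · simpa using integrable_exp_neg_sq_div_two

lemma integral_ite_sq_mul_exp_neg_sq_div_two (b : Prop) [Decidable b] :
    ∫ t : ℝ, (if b then t ^ 2 else 1) * exp (-t ^ 2 / 2) = √(2 * π) := by
  split_ifs
  · exact integral_sq_mul_exp_neg_sq_div_two
  · simpa using integral_exp_neg_sq_div_two

lemma integrable_prod_ite_sq_mul_exp_neg_sq_div_two (i : ι) :
    Integrable fun y : ι → ℝ => ∏ j, (if j = i then y j ^ 2 else 1) * exp (-y j ^ 2 / 2) :=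
  Integrable.fintype_prod (f := fun j (t : ℝ) => (if j = i then t ^ 2 else 1) * exp (-t ^ 2 / 2))
    fun j => integrable_ite_sq_mul_exp_neg_sq_div_two (j = i)

lemma integral_prod_ite_sq_mul_exp_neg_sq_div_two (i : ι) :
    ∫ y : ι → ℝ, ∏ j, (if j = i then y j ^ 2 else 1) * exp (-y j ^ 2 / 2) =
      √(2 * π) ^ Fintype.card ι := by
  rw [integral_fintype_prod_volume_eq_prod
    (f := fun j (t : ℝ) => (if j = i then t ^ 2 else 1) * exp (-t ^ 2 / 2))]
  simp only [integral_ite_sq_mul_exp_neg_sq_div_two, Finset.prod_const, Finset.card_univ]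

lemma integrable_dotProduct_self_mul_exp_neg_dotProduct_self_div_two :
    Integrable fun y : ι → ℝ => (y ⬝ᵥ y) * exp (-(y ⬝ᵥ y) / 2) := by
  simp_rw [dotProduct_self_mul_exp_neg_dotProduct_self_div_two]
  exact integrable_finsetSum _ fun i _ => integrable_prod_ite_sq_mul_exp_neg_sq_div_two i

lemma integral_dotProduct_self_mul_exp_neg_dotProduct_self_div_two :
    ∫ y : ι → ℝ, (y ⬝ᵥ y) * exp (-(y ⬝ᵥ y) / 2) = Fintype.card ι * √(2 * π) ^ Fintype.card ι := by
  simp_rw [dotProduct_self_mul_exp_neg_dotProduct_self_div_two]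
  rw [integral_finsetSum _ fun i _ => integrable_prod_ite_sq_mul_exp_neg_sq_div_two i]
  simp only [integral_prod_ite_sq_mul_exp_neg_sq_div_two, Finset.sum_const, Finset.card_univ,
    nsmul_eq_mul]

end StandardGaussian

section ChangeOfVariables

variable {ι : Type*} [Fintype ι] [DecidableEq ι] {E : Type*} [NormedAddCommGroup E]

lemma measurableEmbedding_mulVec {M : Matrix ι ι ℝ} (hM : M.det ≠ 0) :
    MeasurableEmbedding (M *ᵥ ·) :=
  (M.toLinearEquiv' (invertibleOfIsUnitDet M (isUnit_iff_ne_zero.mpr hM))).toContinuousLinearEquiv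
    |>.toHomeomorph.measurableEmbedding

lemma map_mulVec_volume {M : Matrix ι ι ℝ} (hM : M.det ≠ 0) :
    Measure.map (M *ᵥ ·) volume = ENNReal.ofReal |M.det⁻¹| • volume :=
  Real.map_matrix_volume_pi_eq_smul_volume_pi hM

lemma integral_comp_mulVec [NormedSpace ℝ E] {M : Matrix ι ι ℝ} (hM : M.det ≠ 0)
    (f : (ι → ℝ) → E) :
    ∫ x, f (M *ᵥ x) = |M.det|⁻¹ • ∫ y, f y := by
  rw [← (measurableEmbedding_mulVec hM).integral_map, map_mulVec_volume hM, integral_smul_measure,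
    ENNReal.toReal_ofReal (abs_nonneg _), abs_inv]

lemma integrable_comp_mulVec_iff {M : Matrix ι ι ℝ} (hM : M.det ≠ 0) {f : (ι → ℝ) → E} :
    Integrable (fun x => f (M *ᵥ x)) ↔ Integrable f := by
  rw [← Function.comp_def, ← (measurableEmbedding_mulVec hM).integrable_map_iff,
    map_mulVec_volume hM]
  exact integrable_smul_measure (by simpa using hM) ENNReal.ofReal_ne_top

open scoped MatrixOrder in
lemma Matrix.PosDef.exists_dotProduct_mulVec_eq {Q : Matrix ι ι ℝ} (hQ : Q.PosDef) :
    ∃ B : Matrix ι ι ℝ, |B.det| = √Q.det ∧ ∀ x, x ⬝ᵥ Q *ᵥ x = (B *ᵥ x) ⬝ᵥ (B *ᵥ x) := by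
  obtain ⟨B, rfl⟩ := CStarAlgebra.nonneg_iff_eq_star_mul_self.mp hQ.posSemidef.nonneg
  refine ⟨B, ?_, fun x => ?_⟩
  · rw [det_mul, star_eq_conjTranspose, det_conjTranspose, star_trivial, sqrt_mul_self_eq_abs]
  · rw [← mulVec_mulVec, dotProduct_mulVec, star_eq_conjTranspose,
      conjTranspose_eq_transpose_of_trivial, vecMul_transpose]

lemma Matrix.PosDef.integral_comp_dotProduct_mulVec [NormedSpace ℝ E] {Q : Matrix ι ι ℝ}
    (hQ : Q.PosDef) (f : ℝ → E) :
    ∫ x, f (x ⬝ᵥ Q *ᵥ x) = (√Q.det)⁻¹ • ∫ y : ι → ℝ, f (y ⬝ᵥ y) := by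
  obtain ⟨B, hB, hQB⟩ := hQ.exists_dotProduct_mulVec_eq
  have hBdet : B.det ≠ 0 := abs_pos.mp (hB ▸ sqrt_pos.mpr hQ.det_pos)
  simp_rw [hQB, integral_comp_mulVec hBdet (fun y => f (y ⬝ᵥ y)), hB]

lemma Matrix.PosDef.integrable_comp_dotProduct_mulVec_iff {Q : Matrix ι ι ℝ} (hQ : Q.PosDef)
    {f : ℝ → E} :
    Integrable (fun x => f (x ⬝ᵥ Q *ᵥ x)) ↔ Integrable (fun y : ι → ℝ => f (y ⬝ᵥ y)) := by
  obtain ⟨B, hB, hQB⟩ := hQ.exists_dotProduct_mulVec_eq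
  have hBdet : B.det ≠ 0 := abs_pos.mp (hB ▸ sqrt_pos.mpr hQ.det_pos)
  simp_rw [hQB]
  exact integrable_comp_mulVec_iff hBdet (f := fun y => f (y ⬝ᵥ y))

end ChangeOfVariables

section Gibbs

open InformationTheory

variable {α : Type*} [MeasurableSpace α] {μ : Measure α} {p q : α → ℝ}

lemma mul_klFun_div {a b : ℝ} (hb : 0 < b) :
    b * klFun (a / b) = b - a + (a * log a - a * log b) := by
  rcases eq_or_ne a 0 with rfl | ha
  · simp [klFun]
  · rw [klFun, log_div ha hb.ne']
    field_simp
    ring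

lemma integrable_mul_klFun_div (hq : ∀ x, 0 < q x) (hpi : Integrable p μ)
    (hqi : Integrable q μ) (hplogp : Integrable (fun x => p x * log (p x)) μ)
    (hplogq : Integrable (fun x => p x * log (q x)) μ) :
    Integrable (fun x => q x * klFun (p x / q x)) μ := by
  simp_rw [mul_klFun_div (hq _)]
  exact (hqi.sub hpi).add (hplogp.sub hplogq)

lemma integral_mul_klFun_div (hq : ∀ x, 0 < q x) (hpi : Integrable p μ) (hqi : Integrable q μ)
    (hplogp : Integrable (fun x => p x * log (p x)) μ)
    (hplogq : Integrable (fun x => p x * log (q x)) μ) (hpq : ∫ x, p x ∂μ = ∫ x, q x ∂μ) :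
    ∫ x, q x * klFun (p x / q x) ∂μ = ∫ x, p x * log (p x) ∂μ - ∫ x, p x * log (q x) ∂μ := by
  have hmass : Integrable (fun x => q x - p x) μ := hqi.sub hpi
  have hlog : Integrable (fun x => p x * log (p x) - p x * log (q x)) μ := hplogp.sub hplogq
  simp_rw [mul_klFun_div (hq _)]
  rw [integral_add hmass hlog, integral_sub hqi hpi, integral_sub hplogp hplogq, hpq, sub_self,
    zero_add]

theorem integral_mul_log_le_integral_mul_log (hp : ∀ x, 0 ≤ p x) (hq : ∀ x, 0 < q x)
    (hpi : Integrable p μ) (hqi : Integrable q μ)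
    (hplogp : Integrable (fun x => p x * log (p x)) μ)
    (hplogq : Integrable (fun x => p x * log (q x)) μ) (hpq : ∫ x, p x ∂μ = ∫ x, q x ∂μ) :
    ∫ x, p x * log (q x) ∂μ ≤ ∫ x, p x * log (p x) ∂μ ∧
      (∫ x, p x * log (p x) ∂μ ≤ ∫ x, p x * log (q x) ∂μ → p =ᵐ[μ] q) := by
  have hint := integrable_mul_klFun_div hq hpi hqi hplogp hplogq
  have heq := integral_mul_klFun_div hq hpi hqi hplogp hplogq hpq
  have hnonneg : 0 ≤ fun x => q x * klFun (p x / q x) :=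
    fun x => mul_nonneg (hq x).le (klFun_nonneg (div_nonneg (hp x) (hq x).le))
  have hle := integral_nonneg (μ := μ) hnonneg
  rw [heq] at hle
  refine ⟨by linarith, fun h => ?_⟩
  have hzero : (fun x => q x * klFun (p x / q x)) =ᵐ[μ] 0 := by
    rw [← integral_eq_zero_iff_of_nonneg hnonneg hint, heq]
    linarith
  filter_upwards [hzero] with x hx
  rw [Pi.zero_apply, mul_eq_zero, klFun_eq_zero_iff (div_nonneg (hp x) (hq x).le),
    div_eq_one_iff_eq (hq x).ne'] at hx
  exact hx.resolve_left (hq x).ne'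

end Gibbs

section GaussDensity

variable {n : ℕ} {S : Matrix (Fin n) (Fin n) ℝ}

lemma gaussDensity_eq (x : Fin n → ℝ) :
    gaussDensity S x = √S⁻¹.det / √(2 * π) ^ n * exp (-(x ⬝ᵥ S⁻¹ *ᵥ x) / 2) := by
  have h2π : (2 * π) ^ (-(n : ℝ) / 2) = (√(2 * π) ^ n)⁻¹ := by
    rw [sqrt_eq_rpow, ← rpow_natCast, ← rpow_mul (by positivity), ← rpow_neg (by positivity)]
    ring_nf
  rw [gaussDensity, h2π, det_nonsing_inv, Ring.inverse_eq_inv', sqrt_inv]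
  ring

lemma gaussDensity_pos (hS : S.PosDef) (x : Fin n → ℝ) : 0 < gaussDensity S x := by
  rw [gaussDensity_eq]
  have := hS.inv.det_pos
  positivity

lemma log_gaussDensity (hS : S.PosDef) (x : Fin n → ℝ) :
    log (gaussDensity S x) = log (√S⁻¹.det / √(2 * π) ^ n) - (x ⬝ᵥ S⁻¹ *ᵥ x) / 2 := by
  have := hS.inv.det_pos
  rw [gaussDensity_eq, log_mul (by positivity) (exp_pos _).ne', log_exp]
  ring

lemma integrable_gaussDensity (hS : S.PosDef) : Integrable (gaussDensity S) := by
  rw [funext gaussDensity_eq]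
  exact (hS.inv.integrable_comp_dotProduct_mulVec_iff (f := fun t => exp (-t / 2))).mpr
    integrable_exp_neg_dotProduct_self_div_two |>.const_mul _

lemma integral_gaussDensity (hS : S.PosDef) : ∫ x, gaussDensity S x = 1 := by
  simp_rw [gaussDensity_eq]
  rw [integral_const_mul, hS.inv.integral_comp_dotProduct_mulVec (fun t => exp (-t / 2)),
    integral_exp_neg_dotProduct_self_div_two, Fintype.card_fin, smul_eq_mul]
  have := hS.inv.det_pos
  field_simp

lemma integrable_dotProduct_mulVec_mul_gaussDensity (hS : S.PosDef) :
    Integrable fun x => (x ⬝ᵥ S⁻¹ *ᵥ x) * gaussDensity S x := by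
  simp_rw [gaussDensity_eq, mul_left_comm _ (√S⁻¹.det / √(2 * π) ^ n)]
  exact (hS.inv.integrable_comp_dotProduct_mulVec_iff (f := fun t => t * exp (-t / 2))).mpr
    integrable_dotProduct_self_mul_exp_neg_dotProduct_self_div_two |>.const_mul _

lemma integral_dotProduct_mulVec_mul_gaussDensity (hS : S.PosDef) :
    ∫ x, (x ⬝ᵥ S⁻¹ *ᵥ x) * gaussDensity S x = n := by
  simp_rw [gaussDensity_eq, mul_left_comm _ (√S⁻¹.det / √(2 * π) ^ n)]
  rw [integral_const_mul, hS.inv.integral_comp_dotProduct_mulVec (fun t => t * exp (-t / 2)),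
    integral_dotProduct_self_mul_exp_neg_dotProduct_self_div_two,
    Fintype.card_fin, smul_eq_mul]
  have := hS.inv.det_pos
  field_simp

end GaussDensity

section GaussianCrossEntropy

variable {n : ℕ} {S : Matrix (Fin n) (Fin n) ℝ} {p : (Fin n → ℝ) → ℝ}

lemma integrable_mul_log_gaussDensity (hS : S.PosDef) (hp : Integrable p)
    (hp_moment : Integrable fun x => (x ⬝ᵥ S⁻¹ *ᵥ x) * p x) :
    Integrable fun x => p x * log (gaussDensity S x) := by
  simp_rw [log_gaussDensity hS, mul_sub, mul_div_assoc', mul_comm (p _) (_ ⬝ᵥ _)]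
  exact (hp.mul_const _).sub (hp_moment.div_const 2)

lemma integral_mul_log_gaussDensity (hS : S.PosDef) (hp : Integrable p)
    (hp_moment : Integrable fun x => (x ⬝ᵥ S⁻¹ *ᵥ x) * p x) :
    ∫ x, p x * log (gaussDensity S x) =
      (∫ x, p x) * log (√S⁻¹.det / √(2 * π) ^ n) - (∫ x, (x ⬝ᵥ S⁻¹ *ᵥ x) * p x) / 2 := by
  simp_rw [log_gaussDensity hS, mul_sub, mul_div_assoc', mul_comm (p _) (_ ⬝ᵥ _)]
  rw [integral_sub (hp.mul_const _) (hp_moment.div_const 2), integral_mul_const, integral_div]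

lemma diffEntropy_gaussDensity (hS : S.PosDef) :
    diffEntropy (gaussDensity S) = n / 2 - log (√S⁻¹.det / √(2 * π) ^ n) := by
  rw [diffEntropy, integral_mul_log_gaussDensity hS (integrable_gaussDensity hS)
    (integrable_dotProduct_mulVec_mul_gaussDensity hS), integral_gaussDensity hS,
    integral_dotProduct_mulVec_mul_gaussDensity hS]
  ring

theorem diffEntropy_le_diffEntropy_gaussDensity (hS : S.PosDef) (hp_nonneg : ∀ x, 0 ≤ p x)
    (hp_int : Integrable p) (hp_prob : ∫ x, p x = 1)
    (hp_moment_int : Integrable fun x => (x ⬝ᵥ S⁻¹ *ᵥ x) * p x)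
    (hp_moment : ∫ x, (x ⬝ᵥ S⁻¹ *ᵥ x) * p x ≤ n)
    (hp_ent_int : Integrable fun x => p x * log (p x)) :
    diffEntropy p ≤ diffEntropy (gaussDensity S) ∧
      (diffEntropy p = diffEntropy (gaussDensity S) → p =ᵐ[volume] gaussDensity S) := by
  have hcross : -diffEntropy (gaussDensity S) ≤ ∫ x, p x * log (gaussDensity S x) := by
    rw [diffEntropy_gaussDensity hS, integral_mul_log_gaussDensity hS hp_int hp_moment_int,
      hp_prob]
    linarith
  obtain ⟨hgibbs, hgibbs_eq⟩ := integral_mul_log_le_integral_mul_log hp_nonneg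
    (gaussDensity_pos hS) hp_int (integrable_gaussDensity hS) hp_ent_int
    (integrable_mul_log_gaussDensity hS hp_int hp_moment_int)
    (by rw [hp_prob, integral_gaussDensity hS])
  have hp_ent : diffEntropy p = -∫ x, p x * log (p x) := rfl
  rw [hp_ent]
  exact ⟨by linarith, fun h => hgibbs_eq (by linarith)⟩

end GaussianCrossEntropy

theorem gaussian_maximizes_entropy_under_weighted_moment_general {n : ℕ} (hn : 0 < n)
    (P : Matrix (Fin n) (Fin n) ℝ) (hP : P.PosDef) (c : ℝ) (hc : 0 < c)
    (p : (Fin n → ℝ) → ℝ)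
    (hp_nonneg : ∀ x, 0 ≤ p x)
    (hp_int : Integrable p)
    (hp_prob : ∫ x, p x = 1)
    (hp_moment_int : Integrable (fun x => (x ⬝ᵥ P⁻¹ *ᵥ x) * p x))
    (hp_moment : ∫ x, (x ⬝ᵥ P⁻¹ *ᵥ x) * p x ≤ c)
    (hp_ent_int : Integrable (fun x => p x * Real.log (p x))) :
    diffEntropy p ≤ diffEntropy (gaussDensity ((c / n) • P)) ∧
      (diffEntropy p = diffEntropy (gaussDensity ((c / n) • P)) →
        p =ᵐ[volume] gaussDensity ((c / n) • P)) := by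
  have hcn : 0 < c / n := div_pos hc (Nat.cast_pos.mpr hn)
  have hquad : ∀ x, x ⬝ᵥ ((c / n) • P)⁻¹ *ᵥ x = (c / n)⁻¹ * (x ⬝ᵥ P⁻¹ *ᵥ x) := fun x => by
    have := invertibleOfNonzero hcn.ne'
    rw [Matrix.inv_smul P (c / n) (isUnit_iff_ne_zero.mpr hP.det_pos.ne'), invOf_eq_inv,
      smul_mulVec, dotProduct_smul, smul_eq_mul]
  refine diffEntropy_le_diffEntropy_gaussDensity (hP.smul hcn) hp_nonneg hp_int hp_prob
    ?_ ?_ hp_ent_int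
  · simp_rw [hquad, mul_assoc]
    exact hp_moment_int.const_mul _
  · simp_rw [hquad, mul_assoc]
    rw [integral_const_mul, inv_div]
    calc (n / c) * ∫ x, (x ⬝ᵥ P⁻¹ *ᵥ x) * p x ≤ n / c * c := by gcongr
      _ = n := div_mul_cancel₀ _ hc.ne'

theorem gaussian_maximizes_entropy_under_weighted_moment {n : ℕ} (hn : 0 < n)
    (P : Matrix (Fin n) (Fin n) ℝ) (hP : P.PosDef) (c : ℝ) (hc : 0 < c)
    (p : (Fin n → ℝ) → ℝ)
    (hp_nonneg : ∀ x, 0 ≤ p x)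
    (hp_int : Integrable p)
    (hp_prob : ∫ x, p x = 1)
    (hp_mean : ∀ i, ∫ x, x i * p x = 0)
    (hp_moment_int : Integrable (fun x => (x ⬝ᵥ P⁻¹ *ᵥ x) * p x))
    (hp_moment : ∫ x, (x ⬝ᵥ P⁻¹ *ᵥ x) * p x ≤ c)
    (hp_ent_int : Integrable (fun x => p x * Real.log (p x))) :
    diffEntropy p ≤ diffEntropy (gaussDensity ((c / n) • P)) ∧
      (diffEntropy p = diffEntropy (gaussDensity ((c / n) • P)) →
        p =ᵐ[volume] gaussDensity ((c / n) • P)) :=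
  gaussian_maximizes_entropy_under_weighted_moment_general hn P hP c hc p hp_nonneg hp_int hp_prob
    hp_moment_int hp_moment hp_ent_int
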